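/- Let D ⊆ ℝⁿ be a compact set, g : D → ℝ Lipschitz with constant l_g, and let (x₁,y₁),…,(x_N,y_N) be an ε̄-noisy dataset generated by g with covering radius h(X,D) = h > 0. Fix ε ≥ ε̄ and ρ > 0. Let l* be the minimal Lipschitz constant over all Lipschitz f : D → ℝ with max_i ‖yᵢ − f(xᵢ)‖ ≤ ε. If f : D → ℝ is Lipschitz with max_i ‖yᵢ − f(xᵢ)‖ ≤ ε and Lip(f) ≤ l* + ρ, then sup_{x∈D} ‖g(x) − f(x)‖ ≤ (2·l_g + ρ)·h + 2ε. -/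

import Mathlib

open scoped NNReal

/-!
Since `g` itself fits the data to within `ε̄ ≤ ε`, the minimal constant `l*` is at most
`Lip(g) ≤ l_g`, so `Lip(f) ≤ l_g + ρ`. Given `x ∈ D`, pick a data point `xᵢ` with
`‖x - xᵢ‖ ≤ h` and go from `g x` to `f x` through `g xᵢ`, `yᵢ` and `f xᵢ`: the two Lipschitz
legs cost `l_g h` and `(l_g + ρ) h`, the two data legs at most `ε` each.
-/

/-- The Lipschitz seminorm of `f` on the set `D`. -/
noncomputable def lipSemi {n : ℕ} (D : Set (EuclideanSpace ℝ (Fin n)))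
    (f : EuclideanSpace ℝ (Fin n) → ℝ) : ℝ :=
  sInf {γ : ℝ | 0 ≤ γ ∧ ∀ x ∈ D, ∀ y ∈ D, ‖f x - f y‖ ≤ γ * ‖x - y‖}

section LipSemi

variable {n : ℕ} {D : Set (EuclideanSpace ℝ (Fin n))} {f : EuclideanSpace ℝ (Fin n) → ℝ}

lemma lipSemi_nonneg : 0 ≤ lipSemi D f :=
  Real.sInf_nonneg fun _ hγ => hγ.1

lemma lipSemi_le {C : ℝ} (hC : 0 ≤ C)
    (hf : ∀ x ∈ D, ∀ y ∈ D, ‖f x - f y‖ ≤ C * ‖x - y‖) : lipSemi D f ≤ C :=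
  csInf_le ⟨0, fun _ hγ => hγ.1⟩ ⟨hC, hf⟩

lemma LipschitzOnWith.norm_sub_le_lipSemi_mul {C : ℝ≥0} (hf : LipschitzOnWith C f D)
    {x y : EuclideanSpace ℝ (Fin n)} (hx : x ∈ D) (hy : y ∈ D) :
    ‖f x - f y‖ ≤ lipSemi D f * ‖x - y‖ := by
  rcases (norm_nonneg (x - y)).eq_or_lt with hxy | hxy
  · have hxy : x = y := sub_eq_zero.1 (norm_eq_zero.1 hxy.symm)
    simp [hxy]
  · rw [← div_le_iff₀ hxy]
    exact le_csInf ⟨C, C.coe_nonneg, fun x hx y hy => hf.norm_sub_le hx hy⟩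
      fun γ hγ => (div_le_iff₀ hxy).2 (hγ.2 x hx y hy)

end LipSemi

/-- Its infimum is the paper's minimal Lipschitz constant `l*`. -/
def feasibleLipSemis {n N : ℕ} (D : Set (EuclideanSpace ℝ (Fin n)))
    (xs : Fin N → EuclideanSpace ℝ (Fin n)) (ys : Fin N → ℝ) (ε : ℝ) : Set ℝ :=
  {l | ∃ f : EuclideanSpace ℝ (Fin n) → ℝ,
    (∃ C : ℝ≥0, LipschitzOnWith C f D) ∧ (∀ i, ‖ys i - f (xs i)‖ ≤ ε) ∧ l = lipSemi D f}

lemma sInf_feasibleLipSemis_le {n N : ℕ} {D : Set (EuclideanSpace ℝ (Fin n))}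
    {xs : Fin N → EuclideanSpace ℝ (Fin n)} {ys : Fin N → ℝ} {ε : ℝ}
    {g : EuclideanSpace ℝ (Fin n) → ℝ} {C : ℝ≥0} (hg : LipschitzOnWith C g D)
    (hfit : ∀ i, ‖ys i - g (xs i)‖ ≤ ε) :
    sInf (feasibleLipSemis D xs ys ε) ≤ lipSemi D g :=
  csInf_le ⟨0, by rintro _ ⟨_, -, -, rfl⟩; exact lipSemi_nonneg⟩ ⟨g, ⟨C, hg⟩, hfit, rfl⟩

lemma exists_dist_le_of_infDist_range_le {α ι : Type*} [PseudoMetricSpace α] [Finite ι]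
    [Nonempty ι] {xs : ι → α} {x : α} {h : ℝ} (hx : Metric.infDist x (Set.range xs) ≤ h) :
    ∃ i, dist x (xs i) ≤ h := by
  obtain ⟨_, ⟨i, rfl⟩, hi⟩ :=
    (Set.finite_range xs).isCompact.exists_infDist_eq_dist (Set.range_nonempty xs) x
  exact ⟨i, hi ▸ hx⟩

lemma norm_sub_le_of_near_common_datum {E F : Type*} [SeminormedAddCommGroup E]
    [SeminormedAddCommGroup F] {f g : E → F} {lf lg h ε : ℝ} {x z : E} {y : F}
    (hlf : 0 ≤ lf) (hlg : 0 ≤ lg) (hxz : ‖x - z‖ ≤ h)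
    (hg : ‖g x - g z‖ ≤ lg * ‖x - z‖) (hf : ‖f z - f x‖ ≤ lf * ‖x - z‖)
    (hgy : ‖g z - y‖ ≤ ε) (hfy : ‖y - f z‖ ≤ ε) :
    ‖g x - f x‖ ≤ (lg + lf) * h + 2 * ε :=
  calc ‖g x - f x‖ ≤ ‖g x - g z‖ + ‖g z - y‖ + ‖y - f z‖ + ‖f z - f x‖ := by
        refine (norm_sub_le_norm_sub_add_norm_sub _ (f z) _).trans (add_le_add_left ?_ _)
        refine (norm_sub_le_norm_sub_add_norm_sub _ y _).trans (add_le_add_left ?_ _)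
        exact norm_sub_le_norm_sub_add_norm_sub _ (g z) _
    _ ≤ lg * h + ε + ε + lf * h := by
        gcongr
        exacts [hg.trans (by gcongr), hf.trans (by gcongr)]
    _ = (lg + lf) * h + 2 * ε := by ring

theorem stmt9_general {n N : ℕ} (hN : 0 < N)
    (D : Set (EuclideanSpace ℝ (Fin n)))
    (g : EuclideanSpace ℝ (Fin n) → ℝ) (lg : ℝ) (hlg : 0 ≤ lg)
    (hg : ∀ x ∈ D, ∀ y ∈ D, ‖g x - g y‖ ≤ lg * ‖x - y‖)
    (xs : Fin N → EuclideanSpace ℝ (Fin n)) (hxs : ∀ i, xs i ∈ D) (ys : Fin N → ℝ)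
    (εbar ε ρ h : ℝ) (hεε : εbar ≤ ε)
    (hnoise : ∀ i, ‖g (xs i) - ys i‖ ≤ εbar)
    (hcov : ∀ x ∈ D, Metric.infDist x (Set.range xs) ≤ h)
    (lstar : ℝ)
    (hlstar : lstar = sInf {l : ℝ | ∃ f : EuclideanSpace ℝ (Fin n) → ℝ,
        (∃ C : ℝ≥0, LipschitzOnWith C f D) ∧
        (∀ i, ‖ys i - f (xs i)‖ ≤ ε) ∧
        l = lipSemi D f})
    (f : EuclideanSpace ℝ (Fin n) → ℝ)
    (hfLip : ∃ C : ℝ≥0, LipschitzOnWith C f D)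
    (hfloss : ∀ i, ‖ys i - f (xs i)‖ ≤ ε)
    (hfmin : lipSemi D f ≤ lstar + ρ) :
    ∀ x ∈ D, ‖g x - f x‖ ≤ (2 * lg + ρ) * h + 2 * ε := by
  intro x hx
  obtain ⟨C, hfC⟩ := hfLip
  have hgfit (i : Fin N) : ‖g (xs i) - ys i‖ ≤ ε := (hnoise i).trans hεε
  have hgLip : LipschitzOnWith lg.toNNReal g D :=
    .of_dist_le' fun x hx y hy => by simpa only [dist_eq_norm] using hg x hx y hy
  have hlipf : lipSemi D f ≤ lg + ρ :=
    calc lipSemi D f ≤ lstar + ρ := hfmin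
      _ ≤ lipSemi D g + ρ := by
        rw [hlstar]
        gcongr
        exact sInf_feasibleLipSemis_le hgLip fun i => norm_sub_rev (g (xs i)) _ ▸ hgfit i
      _ ≤ lg + ρ := by gcongr; exact lipSemi_le hlg hg
  have : Nonempty (Fin N) := Fin.pos_iff_nonempty.1 hN
  obtain ⟨i, hi⟩ := exists_dist_le_of_infDist_range_le (hcov x hx)
  rw [dist_eq_norm] at hi
  have hfx : ‖f (xs i) - f x‖ ≤ (lg + ρ) * ‖x - xs i‖ := by
    rw [norm_sub_rev]
    exact (hfC.norm_sub_le_lipSemi_mul hx (hxs i)).trans (by gcongr)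
  have := norm_sub_le_of_near_common_datum (lipSemi_nonneg.trans hlipf) hlg hi
    (hg x hx _ (hxs i)) hfx (hgfit i) (hfloss i)
  linarith

theorem stmt9 {n N : ℕ} (hN : 0 < N)
    (D : Set (EuclideanSpace ℝ (Fin n))) (hD : IsCompact D)
    (g : EuclideanSpace ℝ (Fin n) → ℝ) (lg : ℝ) (hlg : 0 ≤ lg)
    (hg : ∀ x ∈ D, ∀ y ∈ D, ‖g x - g y‖ ≤ lg * ‖x - y‖)
    (xs : Fin N → EuclideanSpace ℝ (Fin n)) (hxs : ∀ i, xs i ∈ D) (ys : Fin N → ℝ)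
    (εbar ε ρ h : ℝ) (hεbar : 0 ≤ εbar) (hεε : εbar ≤ ε) (hρ : 0 < ρ) (hh : 0 < h)
    (hnoise : ∀ i, ‖g (xs i) - ys i‖ ≤ εbar)
    (hcov : ∀ x ∈ D, Metric.infDist x (Set.range xs) ≤ h)
    (lstar : ℝ)
    (hlstar : lstar = sInf {l : ℝ | ∃ f : EuclideanSpace ℝ (Fin n) → ℝ,
        (∃ C : ℝ≥0, LipschitzOnWith C f D) ∧
        (∀ i, ‖ys i - f (xs i)‖ ≤ ε) ∧
        l = lipSemi D f})
    (f : EuclideanSpace ℝ (Fin n) → ℝ)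
    (hfLip : ∃ C : ℝ≥0, LipschitzOnWith C f D)
    (hfloss : ∀ i, ‖ys i - f (xs i)‖ ≤ ε)
    (hfmin : lipSemi D f ≤ lstar + ρ) :
    ∀ x ∈ D, ‖g x - f x‖ ≤ (2 * lg + ρ) * h + 2 * ε :=
  stmt9_general hN D g lg hlg hg xs hxs ys εbar ε ρ h hεε hnoise hcov lstar hlstar f hfLip hfloss
    hfmin
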